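/- Let ρ₁ and ρ₂ be finite-dimensional representations of SO(3), and let π₁, π₂ be the corresponding induced representations of SE(3) acting on compactly supported continuous functions f : ℝ³ → ℝ^{K} by [πᵢ(t,r)f](x) = ρᵢ(r) f(r⁻¹(x − t)). Let κ : ℝ³ × ℝ³ → ℝ^{K₂×K₁} be a continuous kernel defining the linear map (κ·f)(x) = ∫ κ(x,y) f(y) dy. Then κ·(π₁(g)f) = π₂(g)(κ·f) for all g ∈ SE(3) and all f if and only if κ(gx, gy) = ρ₂(r) κ(x,y) ρ₁(r)⁻¹ for all g = (t,r) ∈ SE(3) and all x, y ∈ ℝ³. -/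
import Mathlib

open Matrix MeasureTheory

abbrev SO3 := Matrix.specialOrthogonalGroup (Fin 3) ℝ

/-- Action of a rotation on ℝ³. -/
noncomputable def rot (r : SO3) (x : Fin 3 → ℝ) : Fin 3 → ℝ :=
  (r : Matrix (Fin 3) (Fin 3) ℝ).mulVec x

/-- Action of the inverse of a rotation on ℝ³. -/
noncomputable def rotInv (r : SO3) (x : Fin 3 → ℝ) : Fin 3 → ℝ :=
  ((r : Matrix (Fin 3) (Fin 3) ℝ))⁻¹.mulVec x

lemma rdet (r : SO3) : (r : Matrix (Fin 3) (Fin 3) ℝ).det = 1 :=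
  (Matrix.mem_specialOrthogonalGroup_iff.mp r.2).2

lemma rdet_unit (r : SO3) : IsUnit (r : Matrix (Fin 3) (Fin 3) ℝ).det := by
  rw [rdet]; exact isUnit_one

lemma rot_rotInv (r : SO3) (x : Fin 3 → ℝ) : rot r (rotInv r x) = x := by
  rw [rot, rotInv, mulVec_mulVec, Matrix.mul_nonsing_inv _ (rdet_unit r), one_mulVec]

lemma rotInv_rot (r : SO3) (x : Fin 3 → ℝ) : rotInv r (rot r x) = x := by
  rw [rot, rotInv, mulVec_mulVec, Matrix.nonsing_inv_mul _ (rdet_unit r), one_mulVec]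

lemma rot_continuous (r : SO3) : Continuous (rot r) :=
  continuous_const.matrix_mulVec continuous_id

lemma rotInv_continuous (r : SO3) : Continuous (rotInv r) :=
  continuous_const.matrix_mulVec continuous_id

/-- The rigid motion `z ↦ r z + t` as a homeomorphism. -/
noncomputable def rigidHomeo (r : SO3) (t : Fin 3 → ℝ) : (Fin 3 → ℝ) ≃ₜ (Fin 3 → ℝ) where
  toFun z := rot r z + t
  invFun w := rotInv r (w - t)
  left_inv z := by simp [rotInv_rot]
  right_inv w := by simp [rot_rotInv]
  continuous_toFun := (rot_continuous r).add continuous_const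
  continuous_invFun := (rotInv_continuous r).comp (continuous_id.sub continuous_const)

lemma rigid_measurePreserving (r : SO3) (t : Fin 3 → ℝ) :
    MeasurePreserving (fun z => rot r z + t) (volume : Measure (Fin 3 → ℝ)) volume := by
  have h1 : MeasurePreserving (rot r) (volume : Measure (Fin 3 → ℝ)) volume := by
    refine ⟨(rot_continuous r).measurable, ?_⟩
    have hd : (r : Matrix (Fin 3) (Fin 3) ℝ).det ≠ 0 := by rw [rdet]; norm_num
    have := Real.map_matrix_volume_pi_eq_smul_volume_pi hd
    have he : rot r = ⇑(Matrix.toLin' (r : Matrix (Fin 3) (Fin 3) ℝ)) := by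
      funext x; simp [rot, Matrix.toLin'_apply]
    rw [he, this, rdet]
    norm_num
  exact (measurePreserving_add_right volume t).comp h1

/-- Change of variables along a rigid motion. -/
lemma rigid_integral_comp (r : SO3) (t : Fin 3 → ℝ) {G : Type*} [NormedAddCommGroup G]
    [NormedSpace ℝ G] (g : (Fin 3 → ℝ) → G) :
    ∫ z, g (rot r z + t) = ∫ y, g y :=
  (rigid_measurePreserving r t).integral_comp (rigidHomeo r t).measurableEmbedding g

lemma integral_mulVec_comm {n m : ℕ} (M : Matrix (Fin m) (Fin n) ℝ)
    {F : (Fin 3 → ℝ) → Fin n → ℝ} (hF : Integrable F) :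
    ∫ y, M.mulVec (F y) = M.mulVec (∫ y, F y) := by
  have := (LinearMap.toContinuousLinearMap M.mulVecLin).integral_comp_comm hF
  simpa [Matrix.mulVecLin_apply] using this

lemma integrable_kernel_mulVec {K₁ K₂ : ℕ}
    (κ : (Fin 3 → ℝ) × (Fin 3 → ℝ) → Matrix (Fin K₂) (Fin K₁) ℝ) (hκ : Continuous κ)
    (x : Fin 3 → ℝ) {f : (Fin 3 → ℝ) → Fin K₁ → ℝ} (hf : Continuous f)
    (hcf : HasCompactSupport f) :
    Integrable (fun y => (κ (x, y)).mulVec (f y)) := by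
  apply Continuous.integrable_of_hasCompactSupport
  · exact (hκ.comp (continuous_const.prodMk continuous_id)).matrix_mulVec hf
  · apply hcf.mono
    intro y hy
    simp only [Function.mem_support] at hy ⊢
    intro h0
    exact hy (by rw [h0, Matrix.mulVec_zero])

/-- Normal form of the intertwining identity at a point. -/
lemma normal_form {K₁ K₂ : ℕ}
    (ρ₁ : SO3 → Matrix (Fin K₁) (Fin K₁) ℝ) (ρ₂ : SO3 → Matrix (Fin K₂) (Fin K₂) ℝ)
    (κ : (Fin 3 → ℝ) × (Fin 3 → ℝ) → Matrix (Fin K₂) (Fin K₁) ℝ) (hκ : Continuous κ)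
    (t : Fin 3 → ℝ) (r : SO3) {f : (Fin 3 → ℝ) → Fin K₁ → ℝ}
    (hf : Continuous f) (hcf : HasCompactSupport f) (x : Fin 3 → ℝ) :
    ((∫ y, (κ (x, y)).mulVec ((ρ₁ r).mulVec (f (rotInv r (y - t)))))
        = (ρ₂ r).mulVec (∫ y, (κ (rotInv r (x - t), y)).mulVec (f y)))
    ↔ (∫ z, (κ (x, rot r z + t) * ρ₁ r).mulVec (f z))
        = ∫ z, (ρ₂ r * κ (rotInv r (x - t), z)).mulVec (f z) := by
  have hL : (∫ y, (κ (x, y)).mulVec ((ρ₁ r).mulVec (f (rotInv r (y - t)))))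
      = ∫ z, (κ (x, rot r z + t) * ρ₁ r).mulVec (f z) := by
    rw [← rigid_integral_comp r t (fun y => (κ (x, y)).mulVec ((ρ₁ r).mulVec (f (rotInv r (y - t)))))]
    congr 1; funext z
    rw [add_sub_cancel_right, rotInv_rot, mulVec_mulVec]
  have hR : (ρ₂ r).mulVec (∫ y, (κ (rotInv r (x - t), y)).mulVec (f y))
      = ∫ z, (ρ₂ r * κ (rotInv r (x - t), z)).mulVec (f z) := by
    rw [← integral_mulVec_comm _ (integrable_kernel_mulVec κ hκ _ hf hcf)]
    congr 1; funext z
    rw [mulVec_mulVec]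
  rw [hL, hR]

/-- The map f ↦ κ·f intertwines the induced representations π₁, π₂ of SE(3) (acting by
[πᵢ(t,r)f](x) = ρᵢ(r) f(r⁻¹(x − t))) if and only if the kernel satisfies
κ(gx, gy) = ρ₂(r) κ(x,y) ρ₁(r)⁻¹ for all g = (t,r) ∈ SE(3). -/
theorem stmt0 {K₁ K₂ : ℕ}
    (ρ₁ : SO3 → Matrix (Fin K₁) (Fin K₁) ℝ)
    (ρ₂ : SO3 → Matrix (Fin K₂) (Fin K₂) ℝ)
    (hρ₁mul : ∀ r r' : SO3, ρ₁ (r * r') = ρ₁ r * ρ₁ r')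
    (hρ₂mul : ∀ r r' : SO3, ρ₂ (r * r') = ρ₂ r * ρ₂ r')
    (hρ₁inv : ∀ r, IsUnit (ρ₁ r)) (hρ₂inv : ∀ r, IsUnit (ρ₂ r))
    (κ : (Fin 3 → ℝ) × (Fin 3 → ℝ) → Matrix (Fin K₂) (Fin K₁) ℝ)
    (hκ : Continuous κ) :
    (∀ (t : Fin 3 → ℝ) (r : SO3) (f : (Fin 3 → ℝ) → (Fin K₁ → ℝ)),
        Continuous f → HasCompactSupport f →
        ∀ x : Fin 3 → ℝ,
          (∫ y, (κ (x, y)).mulVec ((ρ₁ r).mulVec (f (rotInv r (y - t)))))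
            = (ρ₂ r).mulVec (∫ y, (κ (rotInv r (x - t), y)).mulVec (f y)))
    ↔ (∀ (t : Fin 3 → ℝ) (r : SO3) (x y : Fin 3 → ℝ),
        κ (rot r x + t, rot r y + t) = ρ₂ r * κ (x, y) * (ρ₁ r)⁻¹) := by
  have hρ₁det : ∀ r, IsUnit (ρ₁ r).det := fun r => (Matrix.isUnit_iff_isUnit_det _).mp (hρ₁inv r)
  constructor
  · intro h t r x y
    -- key: the two continuous matrix-valued functions of z agree
    have key : ∀ x' z : Fin 3 → ℝ,
        κ (x', rot r z + t) * ρ₁ r = ρ₂ r * κ (rotInv r (x' - t), z) := by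
      intro x' z
      set A : (Fin 3 → ℝ) → Matrix (Fin K₂) (Fin K₁) ℝ :=
        fun z => κ (x', rot r z + t) * ρ₁ r with hA
      set B : (Fin 3 → ℝ) → Matrix (Fin K₂) (Fin K₁) ℝ :=
        fun z => ρ₂ r * κ (rotInv r (x' - t), z) with hB
      have hAc : Continuous A :=
        (hκ.comp (continuous_const.prodMk ((rot_continuous r).add continuous_const))).matrix_mul
          continuous_const
      have hBc : Continuous B :=
        continuous_const.matrix_mul (hκ.comp (continuous_const.prodMk continuous_id))
      suffices hs : A = B by
        have := congrFun hs z
        simpa [hA, hB] using this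
      have hcols : ∀ i : Fin K₁,
          (fun z => (A z).mulVec ((Pi.single i 1 : Fin K₁ → ℝ)))
            = fun z => (B z).mulVec ((Pi.single i 1 : Fin K₁ → ℝ)) := by
        intro i
        have hFA : Continuous fun z => (A z).mulVec ((Pi.single i 1 : Fin K₁ → ℝ)) :=
          hAc.matrix_mulVec continuous_const
        have hFB : Continuous fun z => (B z).mulVec ((Pi.single i 1 : Fin K₁ → ℝ)) :=
          hBc.matrix_mulVec continuous_const
        rw [← Continuous.ae_eq_iff_eq (volume : Measure (Fin 3 → ℝ)) hFA hFB]
        apply ae_eq_of_integral_contDiff_smul_eq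
          (hFA.locallyIntegrable) (hFB.locallyIntegrable)
        intro g hg hgs
        have hfc : Continuous fun z => g z • (Pi.single i 1 : Fin K₁ → ℝ) :=
          hg.continuous.smul continuous_const
        have hfcs : HasCompactSupport fun z => g z • (Pi.single i 1 : Fin K₁ → ℝ) := by
          apply hgs.mono
          intro z hz
          simp only [Function.mem_support] at hz ⊢
          intro h0
          exact hz (by rw [h0, zero_smul])
        have := (normal_form ρ₁ ρ₂ κ hκ t r hfc hfcs x').mp (h t r _ hfc hfcs x')
        calc ∫ z, g z • (A z).mulVec ((Pi.single i 1 : Fin K₁ → ℝ))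
            = ∫ z, (A z).mulVec (g z • (Pi.single i 1 : Fin K₁ → ℝ)) := by
              congr 1; funext z; rw [Matrix.mulVec_smul]
          _ = ∫ z, (B z).mulVec (g z • (Pi.single i 1 : Fin K₁ → ℝ)) := this
          _ = ∫ z, g z • (B z).mulVec ((Pi.single i 1 : Fin K₁ → ℝ)) := by
              congr 1; funext z; rw [Matrix.mulVec_smul]
      funext z
      ext j i
      have := congrFun (hcols i) z
      have hj := congrFun this j
      simpa [Matrix.mulVec_single] using hj
    have hk := key (rot r x + t) y
    rw [add_sub_cancel_right, rotInv_rot] at hk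
    have := congrArg (fun M => M * (ρ₁ r)⁻¹) hk
    simpa [Matrix.mul_assoc, Matrix.mul_nonsing_inv _ (hρ₁det r)] using this
  · intro h t r f hf hcf x
    rw [normal_form ρ₁ ρ₂ κ hκ t r hf hcf x]
    congr 1; funext z
    have hk := h t r (rotInv r (x - t)) z
    rw [rot_rotInv, sub_add_cancel] at hk
    rw [hk, Matrix.mul_assoc (ρ₂ r * κ (rotInv r (x - t), z)),
      Matrix.nonsing_inv_mul _ (hρ₁det r), Matrix.mul_one]
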